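/- Let q > 0, q ≠ 1, and p ∈ ℕ. For the Dyson realization of U_q[sl(2)] on the Fock space F(1) (H|l⟩ = (p-2l)|l⟩, E|l⟩ = [l][p-l+1]|l-1⟩, F|l⟩ = |l+1⟩), the subspace F₁ = span{|l⟩ : l > p} is invariant under H, E, F, but the subspace F₀ = span{|l⟩ : l ≤ p} is NOT invariant (since F|p⟩ = |p+1⟩ ∉ F₀). Hence the Dyson representation on F(1) is indecomposable but not irreducible when p ∈ ℕ. -/

import Mathlib

/-
`F₁ = span {|l⟩ : l > p}` is `F`-, `H`- and `E`-stable because `F` raises and `H` preserves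
the level, while `E|p+1⟩ = [p+1][0]|p⟩ = 0`. It has no stable complement: `F` acts as the shift
`|l⟩ ↦ |l+1⟩`, so `F^(p+1)` maps any nonzero vector injectively into `F₁`, hence every nonzero
`F`-stable subspace meets `F₁`.
-/

open Finsupp

noncomputable def qb (q x : ℝ) : ℝ := (q ^ x - q ^ (-x)) / (q - q⁻¹)

lemma qb_zero (q : ℝ) : qb q 0 = 0 := by simp [qb]

namespace Finsupp

variable {α R : Type*} [Semiring R]

lemma span_single_one_eq_supported (s : Set α) :
    Submodule.span R {w : α →₀ R | ∃ l, l ∈ s ∧ w = single l 1} = supported R R s := by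
  rw [supported_eq_span_single]
  congr 1
  ext w
  exact exists_congr fun l => and_congr_right fun _ => eq_comm

lemma mapsTo_supported_of_single_one {s : Set α} {f : (α →₀ R) →ₗ[R] (α →₀ R)}
    (hf : ∀ l ∈ s, f (single l 1) ∈ supported R R s) :
    Set.MapsTo f (supported R R s) (supported R R s) := by
  have : supported R R s ≤ (supported R R s).comap f :=
    (supported_eq_span_single R s).le.trans <| Submodule.span_le.mpr <| by
      rintro _ ⟨l, hl, rfl⟩
      exact hf l hl
  exact fun v hv => this hv

lemma mapDomain_add_mem_of_mapDomain_succ_mem {W : Submodule R (ℕ →₀ R)}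
    (hW : ∀ v ∈ W, mapDomain Nat.succ v ∈ W) {v : ℕ →₀ R} (hv : v ∈ W) (n : ℕ) :
    mapDomain (· + n) v ∈ W := by
  induction n with
  | zero => rwa [show (· + 0 : ℕ → ℕ) = id from rfl, mapDomain_id]
  | succ n ih =>
    have hcomp : (· + (n + 1)) = Nat.succ ∘ (· + n) := rfl
    rw [hcomp, mapDomain_comp]
    exact hW _ ih

lemma eq_bot_of_mapDomain_succ_mem_of_disjoint_supported_Ioi {W : Submodule R (ℕ →₀ R)}
    (hW : ∀ v ∈ W, mapDomain Nat.succ v ∈ W) (p : ℕ)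
    (hdisj : Disjoint (supported R R (Set.Ioi p)) W) : W = ⊥ := by
  refine (Submodule.eq_bot_iff W).mpr fun v hv => ?_
  have hpreimage : (· + (p + 1)) ⁻¹' Set.Ioi p = Set.univ := by
    ext l
    simp only [Set.mem_preimage, Set.mem_Ioi, Set.mem_univ, iff_true]
    omega
  have hshift_mem : mapDomain (· + (p + 1)) v ∈ supported R R (Set.Ioi p) := by
    refine supported_comap_lmapDomain R R _ _ ?_
    rw [hpreimage, supported_univ]
    exact Submodule.mem_top
  have hshift_zero : mapDomain (· + (p + 1)) v = 0 :=
    (Submodule.disjoint_def.mp hdisj) _ hshift_mem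
      (mapDomain_add_mem_of_mapDomain_succ_mem hW hv _)
  exact mapDomain_injective (add_left_injective (p + 1)) (hshift_zero.trans mapDomain_zero.symm)

end Finsupp

lemma dyson_E_mapsTo_supported_Ioi (q : ℝ) (p : ℕ) (E : (ℕ →₀ ℂ) →ₗ[ℂ] (ℕ →₀ ℂ))
    (hE : ∀ l : ℕ, E (single (l + 1) 1) =
      ((qb q ((l : ℝ) + 1) * qb q ((p : ℝ) - ((l : ℝ) + 1) + 1) : ℝ) : ℂ) • single l 1) :
    Set.MapsTo E (supported ℂ ℂ (Set.Ioi p)) (supported ℂ ℂ (Set.Ioi p)) := by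
  refine mapsTo_supported_of_single_one fun l hl => ?_
  obtain ⟨m, rfl⟩ : ∃ m, l = m + 1 := ⟨l - 1, by simp at hl; omega⟩
  rw [hE m]
  rcases (Nat.lt_succ_iff.mp hl).eq_or_lt with rfl | hm
  · simp [qb_zero]
  · exact Submodule.smul_mem _ _ (single_mem_supported ℂ 1 hm)

theorem dyson_sl2_indecomposable_not_irreducible_general (q : ℝ) (p : ℕ)
    (E F H : (ℕ →₀ ℂ) →ₗ[ℂ] (ℕ →₀ ℂ))
    (hH : ∀ l : ℕ, H (single l 1) = (((p : ℝ) - 2 * l : ℝ) : ℂ) • single l 1)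
    (hE : ∀ l : ℕ, E (single (l + 1) 1) =
      ((qb q ((l : ℝ) + 1) * qb q ((p : ℝ) - ((l : ℝ) + 1) + 1) : ℝ) : ℂ) • single l 1)
    (hF : ∀ l : ℕ, F (single l 1) = single (l + 1) 1) :
    (∀ v ∈ Submodule.span ℂ {w : ℕ →₀ ℂ | ∃ l : ℕ, p < l ∧ w = single l 1},
       H v ∈ Submodule.span ℂ {w : ℕ →₀ ℂ | ∃ l : ℕ, p < l ∧ w = single l 1} ∧
       E v ∈ Submodule.span ℂ {w : ℕ →₀ ℂ | ∃ l : ℕ, p < l ∧ w = single l 1} ∧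
       F v ∈ Submodule.span ℂ {w : ℕ →₀ ℂ | ∃ l : ℕ, p < l ∧ w = single l 1}) ∧
    ¬ (∀ v ∈ Submodule.span ℂ {w : ℕ →₀ ℂ | ∃ l : ℕ, l ≤ p ∧ w = single l 1},
         F v ∈ Submodule.span ℂ {w : ℕ →₀ ℂ | ∃ l : ℕ, l ≤ p ∧ w = single l 1}) ∧
    Submodule.span ℂ {w : ℕ →₀ ℂ | ∃ l : ℕ, p < l ∧ w = single l 1} ≠ ⊥ ∧
    Submodule.span ℂ {w : ℕ →₀ ℂ | ∃ l : ℕ, p < l ∧ w = single l 1} ≠ ⊤ ∧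
    ¬ ∃ W : Submodule ℂ (ℕ →₀ ℂ),
        IsCompl (Submodule.span ℂ {w : ℕ →₀ ℂ | ∃ l : ℕ, p < l ∧ w = single l 1}) W ∧
        (∀ v ∈ W, H v ∈ W ∧ E v ∈ W ∧ F v ∈ W) := by
  have hF₁ : Submodule.span ℂ {w : ℕ →₀ ℂ | ∃ l : ℕ, p < l ∧ w = single l 1}
      = supported ℂ ℂ (Set.Ioi p) := span_single_one_eq_supported _
  have hF₀ : Submodule.span ℂ {w : ℕ →₀ ℂ | ∃ l : ℕ, l ≤ p ∧ w = single l 1}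
      = supported ℂ ℂ (Set.Iic p) := span_single_one_eq_supported _
  have hF_shift : ∀ v, F v = mapDomain Nat.succ v := by
    have : F = lmapDomain ℂ ℂ Nat.succ := Finsupp.basisSingleOne.ext fun l => by simp [hF]
    simp [this]
  have hsingle_mem (l : ℕ) (s : Set ℕ) : single l (1 : ℂ) ∈ supported ℂ ℂ s ↔ l ∈ s := by
    simp [mem_supported]
  rw [hF₁, hF₀]
  refine ⟨fun v hv => ⟨?_, dyson_E_mapsTo_supported_Ioi q p E hE hv, ?_⟩, ?_, ?_, ?_, ?_⟩
  · refine mapsTo_supported_of_single_one (fun l hl => ?_) hv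
    rw [hH]
    exact Submodule.smul_mem _ _ (single_mem_supported ℂ 1 hl)
  · refine mapsTo_supported_of_single_one (fun l hl => ?_) hv
    rw [hF, hsingle_mem]
    exact hl.trans (Nat.lt_succ_self l)
  · intro hF₀_stable
    have := hF₀_stable _ ((hsingle_mem p _).mpr (le_refl p))
    rw [hF, hsingle_mem] at this
    exact Nat.not_succ_le_self p this
  · exact (Submodule.ne_bot_iff _).mpr ⟨_, (hsingle_mem (p + 1) _).mpr p.lt_succ_self, by simp⟩
  · exact fun htop => by simpa using (hsingle_mem 0 (Set.Ioi p)).mp (htop ▸ Submodule.mem_top)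
  · rintro ⟨W, hcompl, hW⟩
    have hW_bot : W = ⊥ := eq_bot_of_mapDomain_succ_mem_of_disjoint_supported_Ioi
      (fun v hv => hF_shift v ▸ (hW v hv).2.2) p hcompl.disjoint
    have hF₁_top := eq_top_of_isCompl_bot (hW_bot ▸ hcompl)
    simpa using (hsingle_mem 0 (Set.Ioi p)).mp (hF₁_top ▸ Submodule.mem_top)

theorem dyson_sl2_indecomposable_not_irreducible (q : ℝ) (p : ℕ) (hq : 0 < q) (hq1 : q ≠ 1)
    (E F H : (ℕ →₀ ℂ) →ₗ[ℂ] (ℕ →₀ ℂ))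
    (hH : ∀ l : ℕ, H (single l 1) = (((p : ℝ) - 2 * l : ℝ) : ℂ) • single l 1)
    (hE0 : E (single 0 1) = 0)
    (hE : ∀ l : ℕ, E (single (l + 1) 1) =
      ((qb q ((l : ℝ) + 1) * qb q ((p : ℝ) - ((l : ℝ) + 1) + 1) : ℝ) : ℂ) • single l 1)
    (hF : ∀ l : ℕ, F (single l 1) = single (l + 1) 1) :
    (∀ v ∈ Submodule.span ℂ {w : ℕ →₀ ℂ | ∃ l : ℕ, p < l ∧ w = single l 1},
       H v ∈ Submodule.span ℂ {w : ℕ →₀ ℂ | ∃ l : ℕ, p < l ∧ w = single l 1} ∧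
       E v ∈ Submodule.span ℂ {w : ℕ →₀ ℂ | ∃ l : ℕ, p < l ∧ w = single l 1} ∧
       F v ∈ Submodule.span ℂ {w : ℕ →₀ ℂ | ∃ l : ℕ, p < l ∧ w = single l 1}) ∧
    ¬ (∀ v ∈ Submodule.span ℂ {w : ℕ →₀ ℂ | ∃ l : ℕ, l ≤ p ∧ w = single l 1},
         F v ∈ Submodule.span ℂ {w : ℕ →₀ ℂ | ∃ l : ℕ, l ≤ p ∧ w = single l 1}) ∧
    Submodule.span ℂ {w : ℕ →₀ ℂ | ∃ l : ℕ, p < l ∧ w = single l 1} ≠ ⊥ ∧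
    Submodule.span ℂ {w : ℕ →₀ ℂ | ∃ l : ℕ, p < l ∧ w = single l 1} ≠ ⊤ ∧
    ¬ ∃ W : Submodule ℂ (ℕ →₀ ℂ),
        IsCompl (Submodule.span ℂ {w : ℕ →₀ ℂ | ∃ l : ℕ, p < l ∧ w = single l 1}) W ∧
        (∀ v ∈ W, H v ∈ W ∧ E v ∈ W ∧ F v ∈ W) :=
  dyson_sl2_indecomposable_not_irreducible_general q p E F H hH hE hF
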